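/- A set H of d-admissible arcs is a |w|-Hom-configuration if and only if the following three conditions hold: (1) no two arcs of H cross and no two arcs of H share a vertex; (2) for each arc a ∈ H there are precisely |w| − 1 isolated vertices whose smallest overarc is a; (3) there are at most |w| isolated vertices with no overarc. -/

import Mathlib

/- Combinatorial model of the triangulated category `T_w` generated by a `w`-spherical
object (`w ≤ -1`), via `d`-admissible arcs of the ∞-gon, where `d = w - 1`,
`|d| = 1 - w`, `|w| = -w`. -/

namespace SphericalArcs

/-- An arc is a pair of integers `(t, u)`. -/
abbrev Arc : Type := ℤ × ℤ

/-- `(t,u)` is a `d`-admissible arc: `t > u`, `t - u ≥ |d| - 1 = -w` and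
`t - u ≡ -1 (mod |d|)`, i.e. `(1 - w) ∣ (t - u + 1)`. -/
def Adm (w : ℤ) (a : Arc) : Prop :=
  a.2 < a.1 ∧ -w ≤ a.1 - a.2 ∧ (1 - w) ∣ (a.1 - a.2 + 1)

/-- `k(t,u) = (t - u + 1) / |d|`. -/
def kk (w : ℤ) (a : Arc) : ℤ := (a.1 - a.2 + 1) / (1 - w)

/-- `c ∈ F⁺(a)`: `c = (x,y)` is `d`-admissible, `x = a.1 + i·d` for some
`0 ≤ i ≤ k(a) - 1`, and `y ≤ a.2`. -/
def Fplus (w : ℤ) (a c : Arc) : Prop :=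
  Adm w c ∧ (∃ i : ℤ, 0 ≤ i ∧ i ≤ kk w a - 1 ∧ c.1 = a.1 + i * (w - 1)) ∧ c.2 ≤ a.2

/-- `c ∈ F⁻(a)`: `c = (x,y)` is `d`-admissible, `y = a.2 - i·d` for some
`0 ≤ i ≤ k(a) - 1`, and `x ≥ a.1`. -/
def Fminus (w : ℤ) (a c : Arc) : Prop :=
  Adm w c ∧ (∃ i : ℤ, 0 ≤ i ∧ i ≤ kk w a - 1 ∧ c.2 = a.2 - i * (w - 1)) ∧ a.1 ≤ c.1

/-- The Serre functor: `S(t,u) = (t - w, u - w)`. -/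
def Serre (w : ℤ) (a : Arc) : Arc := (a.1 - w, a.2 - w)

/-- `Hom(a,c) ≠ 0` iff `c ∈ F⁺(a) ∪ F⁻(S(a))`. -/
def HomNe (w : ℤ) (a c : Arc) : Prop := Fplus w a c ∨ Fminus w (Serre w a) c

/-- `Ext^j(a,b) ≠ 0` iff `Hom(a, Σ^j b) ≠ 0`, where `Σ^j b = (b.1 - j, b.2 - j)`. -/
def ExtNe (w : ℤ) (j : ℤ) (a b : Arc) : Prop := HomNe w a (b.1 - j, b.2 - j)

/-- Two arcs `(t,u)` and `(t',u')` cross if `u < u' < t < t'` or `u' < u < t' < t`. -/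
def Cross (a b : Arc) : Prop :=
  (a.2 < b.2 ∧ b.2 < a.1 ∧ a.1 < b.1) ∨ (b.2 < a.2 ∧ a.2 < b.1 ∧ b.1 < a.1)

/-- Two arcs share a vertex if `{t,u} ∩ {t',u'} ≠ ∅`. -/
def ShareVertex (a b : Arc) : Prop :=
  a.1 = b.1 ∨ a.1 = b.2 ∨ a.2 = b.1 ∨ a.2 = b.2

/-- A `|w|`-Hom-configuration: a set `H` of `d`-admissible arcs such that a
`d`-admissible arc `h` belongs to `H` iff `Ext^i(x,h) = 0` for every `x ∈ H` and
`i ∈ {w+1, …, -1}`, and `Ext^i(x,h) = 0` for every `x ∈ H \ {h}` and `i ∈ {0, w}`. -/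
def IsHomConfig (w : ℤ) (H : Set Arc) : Prop :=
  (∀ h ∈ H, Adm w h) ∧
  ∀ h : Arc, Adm w h →
    (h ∈ H ↔
      (∀ x ∈ H, ∀ i : ℤ, w + 1 ≤ i → i ≤ -1 → ¬ ExtNe w i x h) ∧
      (∀ x ∈ H, x ≠ h → ¬ ExtNe w 0 x h ∧ ¬ ExtNe w w x h))

/-- `v` is an isolated vertex of `H`: it is not an endpoint of any arc of `H`. -/
def Isolated (H : Set Arc) (v : ℤ) : Prop := ∀ a ∈ H, a.1 ≠ v ∧ a.2 ≠ v

/-- `a ∈ H` is an overarc of `v`: `a.2 < v < a.1`. -/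
def IsOverarc (H : Set Arc) (a : Arc) (v : ℤ) : Prop := a ∈ H ∧ a.2 < v ∧ v < a.1

/-- `a` is the smallest overarc of `v` in `H`. -/
def IsSmallestOverarc (H : Set Arc) (a : Arc) (v : ℤ) : Prop :=
  IsOverarc H a v ∧ ∀ b : Arc, IsOverarc H b v → b.2 ≤ a.2 ∧ a.1 ≤ b.1

/-- The set of isolated vertices of `H` having no overarc in `H`. -/
def NoOverarcIsolated (H : Set Arc) : Set ℤ :=
  {v | Isolated H v ∧ ∀ a : Arc, ¬ IsOverarc H a v}

/-- A left `|w|`-Riedtmann configuration. -/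
def IsLeftRiedtmann (w : ℤ) (C : Set Arc) : Prop :=
  (∀ c ∈ C, Adm w c) ∧
  (∀ x ∈ C, ∀ y ∈ C, x ≠ y → ∀ i : ℤ, w ≤ i → i ≤ 0 → ¬ ExtNe w i x y) ∧
  ∀ z : Arc, Adm w z → ∃ x ∈ C, ∃ i : ℤ, w + 1 ≤ i ∧ i ≤ 0 ∧ ExtNe w i x z

/-- A right `|w|`-Riedtmann configuration. -/
def IsRightRiedtmann (w : ℤ) (C : Set Arc) : Prop :=
  (∀ c ∈ C, Adm w c) ∧
  (∀ x ∈ C, ∀ y ∈ C, x ≠ y → ∀ i : ℤ, w ≤ i → i ≤ 0 → ¬ ExtNe w i x y) ∧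
  ∀ z : Arc, Adm w z → ∃ x ∈ C, ∃ i : ℤ, w + 1 ≤ i ∧ i ≤ 0 ∧ ExtNe w i z x

end SphericalArcs

/-!
For `w ≤ i ≤ 0`, some `Ext^i(x,h)` is nonzero exactly when the arcs `x` and `h` cross or share
a vertex, so a `|w|`-Hom-configuration is the same thing as a maximal set of pairwise noncrossing,
vertex-disjoint `d`-admissible arcs.

Since every admissible arc spans a multiple of `|d|` vertices, the vertices of an interval
`(q,p)` lying under no arc of `H` inside `(q,p)` number `p - q - 1` modulo `|d|`. Apply this to
a class of isolated vertices with the same overarcs (those with smallest overarc `a`, or those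
with none): two members `v < v'` with exactly `|w| - 1` members strictly between them span an
admissible arc `(v', v)` that is compatible with `H`. Hence `H` is maximal exactly when every such
class has at most `|w|` elements, and under an arc `a` the count is `≡ -2 (mod |d|)`, hence
exactly `|w| - 1`.
-/

theorem Int.le_of_dvd_sub_of_lt_add {D a b : ℤ} (hdvd : D ∣ b - a) (hlt : a < b + D) :
    a ≤ b := by
  by_contra! hba
  have := Int.le_of_dvd (by omega) (dvd_sub_comm.mp hdvd)
  omega

theorem Int.exists_Ico_dvd_sub {D : ℤ} (hD : 0 < D) (a n : ℤ) :
    ∃ i, a ≤ i ∧ i < a + D ∧ D ∣ n - i := by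
  refine ⟨a + (n - a) % D, ?_, ?_, ?_⟩
  · have := Int.emod_nonneg (n - a) hD.ne'; omega
  · have := Int.emod_lt_of_pos (n - a) hD; omega
  · rw [show n - (a + (n - a) % D) = n - a - (n - a) % D by ring]
    exact Int.dvd_self_sub_emod

theorem Int.exists_mul_eq_iff {D K e : ℤ} (hD : 0 < D) :
    (∃ j, 0 ≤ j ∧ j ≤ K ∧ e = j * D) ↔ 0 ≤ e ∧ e ≤ K * D ∧ D ∣ e := by
  constructor
  · rintro ⟨j, hj0, hjK, rfl⟩
    exact ⟨mul_nonneg hj0 hD.le, mul_le_mul_of_nonneg_right hjK hD.le, dvd_mul_left D j⟩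
  · rintro ⟨he0, heK, j, rfl⟩
    exact ⟨j, nonneg_of_mul_nonneg_right he0 hD, le_of_mul_le_mul_right (by linarith) hD,
      mul_comm D j⟩

theorem Int.ncard_Ioo {a b : ℤ} (hab : a < b) : ((Set.Ioo a b).ncard : ℤ) = b - a - 1 := by
  rw [← Finset.coe_Ioo, Set.ncard_coe_finset, Int.card_Ioo]
  omega

theorem Set.exists_ncard_inter_Ioo_eq {S : Set ℤ} {v : ℤ} {n : ℕ} (v' : ℤ) (hv' : v' ∈ S)
    (hlt : v < v') (hn : n ≤ (S ∩ Ioo v v').ncard) :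
    ∃ u ∈ S, v < u ∧ (S ∩ Ioo v u).ncard = n := by
  obtain ⟨k, hk⟩ : ∃ k, (S ∩ Ioo v v').ncard = k := ⟨_, rfl⟩
  induction k generalizing v' with
  | zero => exact ⟨v', hv', hlt, by omega⟩
  | succ k ih =>
    rcases (show n = k + 1 ∨ n ≤ k by omega) with rfl | hnk
    · exact ⟨v', hv', hlt, hk⟩
    have hfin : (S ∩ Ioo v v').Finite := (finite_Ioo v v').subset inter_subset_right
    obtain ⟨u, hu, hmax⟩ :=
      exists_max_image _ id hfin (nonempty_of_ncard_ne_zero (by omega))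
    have hcut : S ∩ Ioo v u = (S ∩ Ioo v v') \ {u} := by
      ext x
      simp only [mem_inter_iff, mem_Ioo, mem_sdiff, mem_singleton_iff]
      constructor
      · rintro ⟨hxS, hvx, hxu⟩
        exact ⟨⟨hxS, hvx, hxu.trans hu.2.2⟩, hxu.ne⟩
      · rintro ⟨hx, hxu⟩
        exact ⟨hx.1, hx.2.1, lt_of_le_of_ne (hmax x hx) hxu⟩
    exact ih u hu.1 hu.2.1 (by rw [hcut, ncard_sdiff_singleton_of_mem hu]; omega)
      (by rw [hcut, ncard_sdiff_singleton_of_mem hu]; omega)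

theorem Set.exists_ncard_inter_Ioo_eq_of_subset {S F : Set ℤ} (hFS : F ⊆ S) (hF : F.Finite)
    {n : ℕ} (hn : n + 2 ≤ F.ncard) :
    ∃ v ∈ S, ∃ v' ∈ S, v < v' ∧ (S ∩ Ioo v v').ncard = n := by
  obtain ⟨v, hvF, hvmin⟩ := exists_min_image F id hF (nonempty_of_ncard_ne_zero (by omega))
  have hF' : (F \ {v}).ncard = F.ncard - 1 := ncard_sdiff_singleton_of_mem hvF
  obtain ⟨v', hv'F, hv'max⟩ :=
    exists_max_image (F \ {v}) id hF.sdiff (nonempty_of_ncard_ne_zero (by omega))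
  have hlt : v < v' := lt_of_le_of_ne (hvmin v' hv'F.1) (Ne.symm hv'F.2)
  have hsub : (F \ {v}) \ {v'} ⊆ S ∩ Ioo v v' := fun x ⟨⟨hxF, hxv⟩, hxv'⟩ =>
    ⟨hFS hxF, lt_of_le_of_ne (hvmin x hxF) (Ne.symm hxv),
      lt_of_le_of_ne (hv'max x ⟨hxF, hxv⟩) hxv'⟩
  have hF'' := ncard_sdiff_singleton_of_mem hv'F
  have hle := ncard_le_ncard hsub ((finite_Ioo v v').subset inter_subset_right)
  obtain ⟨u, hu, hvu, hcard⟩ := exists_ncard_inter_Ioo_eq (n := n) v' (hFS hv'F.1) hlt (by omega)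
  exact ⟨v, hFS hvF, u, hu, hvu, hcard⟩

open Set

namespace SphericalArcs

section

variable {w : ℤ} {H : Set Arc}

theorem Adm.shift {a : Arc} (ha : Adm w a) (i : ℤ) : Adm w (a.1 - i, a.2 - i) := by
  obtain ⟨h1, h2, h3⟩ := ha
  exact ⟨by simp only; omega, by simp only; omega, by simpa using h3⟩

theorem kk_sub_one_mul {a : Arc} (ha : Adm w a) : (kk w a - 1) * (1 - w) = a.1 - a.2 + w := by
  rw [sub_mul, kk, Int.ediv_mul_cancel ha.2.2]
  ring

theorem fplus_iff (hw : w ≤ -1) {x c : Arc} (hx : Adm w x) :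
    Fplus w x c ↔ Adm w c ∧ (0 ≤ x.1 - c.1 ∧ x.1 - c.1 ≤ x.1 - x.2 + w ∧ (1 - w) ∣ x.1 - c.1) ∧
      c.2 ≤ x.2 := by
  rw [← kk_sub_one_mul hx, ← Int.exists_mul_eq_iff (by omega), Fplus]
  refine and_congr_right fun _ => and_congr_left fun _ => exists_congr fun j => ?_
  exact and_congr_right fun _ => and_congr_right fun _ => by constructor <;> intro h <;> linarith

theorem fminus_serre_iff (hw : w ≤ -1) {x c : Arc} (hx : Adm w x) :
    Fminus w (Serre w x) c ↔
      Adm w c ∧ (0 ≤ c.2 - x.2 + w ∧ c.2 - x.2 + w ≤ x.1 - x.2 + w ∧ (1 - w) ∣ c.2 - x.2 + w) ∧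
        x.1 - w ≤ c.1 := by
  have hk : kk w (Serre w x) = kk w x := by simp only [kk, Serre]; ring_nf
  rw [← kk_sub_one_mul hx, ← Int.exists_mul_eq_iff (by omega), Fminus, hk]
  refine and_congr_right fun _ => and_congr_left fun _ => exists_congr fun j => ?_
  exact and_congr_right fun _ => and_congr_right fun _ => by
    simp only [Serre]; constructor <;> intro h <;> linarith

theorem extNe_iff (hw : w ≤ -1) {i : ℤ} {x h : Arc} (hx : Adm w x) (hh : Adm w h) :
    ExtNe w i x h ↔
      (0 ≤ x.1 - (h.1 - i) ∧ x.1 - (h.1 - i) ≤ x.1 - x.2 + w ∧ (1 - w) ∣ x.1 - (h.1 - i) ∧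
        h.2 - i ≤ x.2) ∨
      (0 ≤ h.2 - i - x.2 + w ∧ h.2 - i - x.2 + w ≤ x.1 - x.2 + w ∧
        (1 - w) ∣ h.2 - i - x.2 + w ∧ x.1 - w ≤ h.1 - i) := by
  simp only [ExtNe, HomNe, fplus_iff hw hx, fminus_serre_iff hw hx, Adm.shift hh i, true_and,
    and_assoc]

theorem not_extNe_self (hw : w ≤ -1) {h : Arc} (hh : Adm w h) {i : ℤ} (hi₁ : w + 1 ≤ i)
    (hi₂ : i ≤ -1) : ¬ ExtNe w i h h := by
  rw [extNe_iff hw hh hh]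
  omega

theorem exists_extNe_iff (hw : w ≤ -1) {x h : Arc} (hx : Adm w x) (hh : Adm w h) :
    (∃ i, w ≤ i ∧ i ≤ 0 ∧ ExtNe w i x h) ↔ Cross x h ∨ ShareVertex x h := by
  constructor
  · rintro ⟨i, hi₁, hi₂, he⟩
    rw [extNe_iff hw hx hh] at he
    have := hx.1; have := hh.1
    unfold Cross ShareVertex
    omega
  intro hcs
  obtain ⟨kx, hkx⟩ := hx.2.2
  obtain ⟨kh, hkh⟩ := hh.2.2
  have hlo := hx.1; have hlo' := hh.1
  have : (h.2 ≤ x.2 ∧ x.2 ≤ h.1 ∧ h.1 ≤ x.1) ∨ (x.2 ≤ h.2 ∧ h.2 ≤ x.1 ∧ x.1 ≤ h.1) := by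
    unfold Cross ShareVertex at hcs
    omega
  -- Take `i ∈ [w, 0]` in the residue class mod `|d|` that makes the shifted endpoint land on
  -- the progression of `F⁺(x)` resp. `F⁻(S x)`; each bound then holds because both sides have
  -- the same residue and differ by less than `|d|`.
  have hbound := @Int.le_of_dvd_sub_of_lt_add (1 - w)
  rcases this with ⟨r₁, r₂, r₃⟩ | ⟨r₁, r₂, r₃⟩
  · obtain ⟨i, hi₁, hi₂, m, hm⟩ := Int.exists_Ico_dvd_sub (by omega : 0 < 1 - w) w (h.1 - x.1)
    have hd : (1 - w) ∣ x.1 - (h.1 - i) := ⟨-m, by linear_combination -hm⟩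
    refine ⟨i, hi₁, by omega, (extNe_iff hw hx hh).mpr (Or.inl ⟨?_, ?_, hd, ?_⟩)⟩
    · exact hbound (by simpa using hd) (by omega)
    · exact hbound ⟨kx - 1 + m, by linear_combination hkx + hm⟩ (by omega)
    · exact hbound ⟨-m - kx + kh, by linear_combination hkh - hkx - hm⟩ (by omega)
  · obtain ⟨i, hi₁, hi₂, m, hm⟩ :=
      Int.exists_Ico_dvd_sub (by omega : 0 < 1 - w) w (h.2 - x.2 + w)
    have hd : (1 - w) ∣ h.2 - i - x.2 + w := ⟨m, by linear_combination hm⟩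
    refine ⟨i, hi₁, by omega, (extNe_iff hw hx hh).mpr (Or.inr ⟨?_, ?_, hd, ?_⟩)⟩
    · exact hbound (by simpa using hd) (by omega)
    · exact hbound ⟨kx - 1 - m, by linear_combination hkx - hm⟩ (by omega)
    · exact hbound ⟨kh + m - kx, by linear_combination hkh + hm - hkx⟩ (by omega)

def IsNoncrossing (H : Set Arc) : Prop :=
  ∀ a ∈ H, ∀ b ∈ H, a ≠ b → ¬ Cross a b ∧ ¬ ShareVertex a b

def IsMaximalNoncrossing (w : ℤ) (H : Set Arc) : Prop :=
  IsNoncrossing H ∧ ∀ z : Arc, Adm w z → z ∉ H → ∃ x ∈ H, Cross x z ∨ ShareVertex x z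

theorem homConfig_condition_iff (hw : w ≤ -1) (hAdm : ∀ h ∈ H, Adm w h) {h : Arc}
    (hh : Adm w h) :
    ((∀ x ∈ H, ∀ i : ℤ, w + 1 ≤ i → i ≤ -1 → ¬ ExtNe w i x h) ∧
      (∀ x ∈ H, x ≠ h → ¬ ExtNe w 0 x h ∧ ¬ ExtNe w w x h)) ↔
      ∀ x ∈ H, x ≠ h → ¬ Cross x h ∧ ¬ ShareVertex x h := by
  constructor
  · rintro ⟨hmid, hends⟩ x hx hxh
    have hvan : ¬ ∃ i, w ≤ i ∧ i ≤ 0 ∧ ExtNe w i x h := by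
      rintro ⟨i, hi₁, hi₂, he⟩
      rcases (show i = 0 ∨ i = w ∨ (w + 1 ≤ i ∧ i ≤ -1) by omega) with rfl | rfl | ⟨hi₁, hi₂⟩
      exacts [(hends x hx hxh).1 he, (hends x hx hxh).2 he, hmid x hx i hi₁ hi₂ he]
    rw [exists_extNe_iff hw (hAdm x hx) hh, not_or] at hvan
    exact hvan
  · intro hcomp
    have hvan : ∀ x ∈ H, x ≠ h → ∀ i, w ≤ i → i ≤ 0 → ¬ ExtNe w i x h :=
      fun x hx hxh i hi₁ hi₂ he =>
        ((exists_extNe_iff hw (hAdm x hx) hh).mp ⟨i, hi₁, hi₂, he⟩).elim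
          (hcomp x hx hxh).1 (hcomp x hx hxh).2
    refine ⟨fun x hx i hi₁ hi₂ => ?_, fun x hx hxh =>
      ⟨hvan x hx hxh 0 (by omega) le_rfl, hvan x hx hxh w le_rfl (by omega)⟩⟩
    by_cases hxh : x = h
    · exact hxh ▸ not_extNe_self hw hh hi₁ hi₂
    · exact hvan x hx hxh i (by omega) (by omega)

theorem isHomConfig_iff_isMaximalNoncrossing (hw : w ≤ -1) (hAdm : ∀ h ∈ H, Adm w h) :
    IsHomConfig w H ↔ IsMaximalNoncrossing w H := by
  rw [IsHomConfig, and_iff_right hAdm]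
  refine (forall₂_congr fun h hh => by rw [homConfig_condition_iff hw hAdm hh]).trans ?_
  constructor
  · intro hmem
    refine ⟨fun a ha b hb hab => (hmem b (hAdm b hb)).mp hb a ha hab, fun z hz hzH => ?_⟩
    by_contra! hcomp
    exact hzH ((hmem z hz).mpr fun x hx _ => hcomp x hx)
  · rintro ⟨hnc, hmax⟩ h hh
    refine ⟨fun hmem x hx hxh => hnc x hx h hmem hxh, fun hcomp => ?_⟩
    by_contra hhH
    obtain ⟨x, hx, hcs⟩ := hmax h hh hhH
    have := hcomp x hx (fun hxh => hhH (hxh ▸ hx))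
    tauto

def uncovered (H : Set Arc) (q p : ℤ) : Set ℤ :=
  {x | q < x ∧ x < p ∧ ∀ b ∈ H, q < b.2 → b.1 < p → ¬ (b.2 ≤ x ∧ x ≤ b.1)}

theorem uncovered_subset_Ioo (q p : ℤ) : uncovered H q p ⊆ Ioo q p := fun _ hx => ⟨hx.1, hx.2.1⟩

theorem uncovered_eq_of_mem (hnc : IsNoncrossing H) {b : Arc} (hb : b ∈ H) (hb₁ : b.2 < b.1)
    {q p : ℤ} (hq : q < b.2) (hp : b.1 + 1 = p) : uncovered H q p = uncovered H q b.2 := by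
  ext x
  constructor
  · rintro ⟨hqx, hxp, hcov⟩
    have hxb : x < b.2 := by
      by_contra! hbx
      exact hcov b hb hq (by omega) ⟨hbx, by omega⟩
    refine ⟨hqx, hxb, fun c hc hqc hcb hcx => hcov c hc hqc (by omega) hcx⟩
  · rintro ⟨hqx, hxb, hcov⟩
    refine ⟨hqx, by omega, fun c hc hqc hcp hcx => ?_⟩
    have hcb : c ≠ b := by rintro rfl; omega
    have := hnc c hc b hb hcb
    unfold Cross ShareVertex at this
    exact hcov c hc hqc (by omega) hcx

theorem uncovered_eq_insert {q p : ℤ} (hqp : q + 1 < p) (hno : ∀ b ∈ H, q < b.2 → b.1 + 1 ≠ p) :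
    uncovered H q p = insert (p - 1) (uncovered H q (p - 1)) := by
  ext x
  simp only [uncovered, mem_insert_iff, mem_ofPred_eq]
  constructor
  · rintro ⟨hqx, hxp, hcov⟩
    rcases eq_or_lt_of_le (show x ≤ p - 1 by omega) with rfl | hx
    · exact Or.inl rfl
    · exact Or.inr ⟨hqx, hx, fun b hb hq _ => hcov b hb hq (by omega)⟩
  · rintro (rfl | ⟨hqx, hxp, hcov⟩)
    · exact ⟨by omega, by omega, fun b hb hq hbp hcov => hno b hb hq (by omega)⟩
    · exact ⟨hqx, by omega, fun b hb hq hbp =>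
        hcov b hb hq (lt_of_le_of_ne (by omega) (fun h => hno b hb hq (by omega)))⟩

theorem dvd_sub_ncard_uncovered (hAdm : ∀ h ∈ H, Adm w h) (hnc : IsNoncrossing H) {q p : ℤ}
    (hqp : q < p) : (1 - w) ∣ p - q - 1 - (uncovered H q p).ncard := by
  obtain ⟨n, hn⟩ : ∃ n : ℕ, p - q = n + 1 := ⟨(p - q - 1).toNat, by omega⟩
  induction n using Nat.strong_induction_on generalizing p with
  | _ n ih =>
  -- Peel off either the arc of `H` ending at `p - 1`, which spans a multiple of `|d|` vertices,
  -- or the uncovered vertex `p - 1`.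
  by_cases hb : ∃ b ∈ H, q < b.2 ∧ b.1 + 1 = p
  · obtain ⟨b, hbH, hq, hp⟩ := hb
    obtain ⟨hb₁, -, hdvd⟩ := hAdm b hbH
    have hrec := ih (b.2 - q - 1).toNat (by omega) hq (by omega)
    rw [uncovered_eq_of_mem hnc hbH hb₁ hq hp]
    have := dvd_add hrec hdvd
    rwa [show b.2 - q - 1 - ((uncovered H q b.2).ncard : ℤ) + (b.1 - b.2 + 1)
      = p - q - 1 - (uncovered H q b.2).ncard by omega] at this
  push Not at hb
  rcases n with _ | n
  · have : uncovered H q p = ∅ :=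
      eq_empty_of_forall_notMem fun x hx => by have := hx.1; have := hx.2.1; omega
    simp [this, show p - q - 1 = 0 by omega]
  have hnot : p - 1 ∉ uncovered H q (p - 1) := fun h => h.2.1.false
  have hfin := (finite_Ioo q (p - 1)).subset (uncovered_subset_Ioo (H := H) q (p - 1))
  rw [uncovered_eq_insert (by omega) hb, ncard_insert_of_notMem hnot hfin]
  have := ih n (by omega) (show q < p - 1 by omega) (by omega)
  rwa [show p - 1 - q - 1 - ((uncovered H q (p - 1)).ncard : ℤ)
    = p - q - 1 - ((uncovered H q (p - 1)).ncard + 1 : ℕ) by push_cast; ring] at this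

theorem isolated_of_mem_uncovered (hAdm : ∀ h ∈ H, Adm w h) {q p x : ℤ}
    (hin : ∀ b ∈ H, (q < b.1 ∧ b.1 < p) ∨ (q < b.2 ∧ b.2 < p) → q < b.2 ∧ b.1 < p)
    (hx : x ∈ uncovered H q p) : Isolated H x := by
  intro b hb
  have := (hAdm b hb).1
  constructor <;> rintro rfl
  · exact hx.2.2 b hb (hin b hb (Or.inl ⟨hx.1, hx.2.1⟩)).1 (hx.2.1) ⟨this.le, le_rfl⟩
  · exact hx.2.2 b hb hx.1 (hin b hb (Or.inr ⟨hx.1, hx.2.1⟩)).2 ⟨le_rfl, this.le⟩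

theorem le_of_isOverarc_of_mem_uncovered {q p x : ℤ}
    (hin : ∀ b ∈ H, (q < b.1 ∧ b.1 < p) ∨ (q < b.2 ∧ b.2 < p) → q < b.2 ∧ b.1 < p)
    (hx : x ∈ uncovered H q p) {b : Arc} (hb : IsOverarc H b x) : b.2 ≤ q ∧ p ≤ b.1 := by
  obtain ⟨hqx, hxp, hcov⟩ := hx
  obtain ⟨hbH, hbx, hxb⟩ := hb
  have := hcov b hbH
  have := hin b hbH
  omega

theorem exists_isSmallestOverarc (hnc : IsNoncrossing H) {v : ℤ}
    (hex : ∃ b : Arc, IsOverarc H b v) : ∃ a : Arc, IsSmallestOverarc H a v := by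
  obtain ⟨n, ⟨a, hav, rfl⟩, hleast⟩ :=
    Int.exists_least_of_bdd (P := fun n => ∃ b : Arc, IsOverarc H b v ∧ b.1 - b.2 = n)
      ⟨0, by rintro n ⟨b, hb, rfl⟩; have := hb.2; omega⟩
      (by obtain ⟨b, hb⟩ := hex; exact ⟨b.1 - b.2, b, hb, rfl⟩)
  refine ⟨a, hav, fun b hbv => ?_⟩
  rcases eq_or_ne b a with rfl | hba
  · exact ⟨le_rfl, le_rfl⟩
  have hcs := hnc b hbv.1 a hav.1 hba
  have := hleast (b.1 - b.2) ⟨b, hbv, rfl⟩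
  have := hbv.2; have := hav.2
  unfold Cross ShareVertex at hcs
  omega

theorem setOf_isSmallestOverarc_eq_uncovered (hAdm : ∀ h ∈ H, Adm w h) (hnc : IsNoncrossing H)
    {a : Arc} (ha : a ∈ H) :
    {v : ℤ | Isolated H v ∧ IsSmallestOverarc H a v} = uncovered H a.2 a.1 := by
  have hin : ∀ b ∈ H, (a.2 < b.1 ∧ b.1 < a.1) ∨ (a.2 < b.2 ∧ b.2 < a.1) →
      a.2 < b.2 ∧ b.1 < a.1 := by
    intro b hb hend
    have hba : b ≠ a := by rintro rfl; omega
    have hcs := hnc b hb a ha hba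
    have := (hAdm b hb).1
    unfold Cross ShareVertex at hcs
    omega
  ext x
  constructor
  · rintro ⟨hiso, ⟨-, hax, hxa⟩, hmin⟩
    refine ⟨hax, hxa, fun b hb hab hba hcov => ?_⟩
    have := hiso b hb
    have := hmin b ⟨hb, by omega, by omega⟩
    omega
  · intro hx
    exact ⟨isolated_of_mem_uncovered hAdm hin hx, ⟨ha, hx.1, hx.2.1⟩,
      fun b hb => le_of_isOverarc_of_mem_uncovered hin hx hb⟩

def IsOverarcClass (H : Set Arc) (S : Set ℤ) : Prop :=
  ∀ v ∈ S, ∀ x, x ∈ S ↔ Isolated H x ∧ ∀ b, IsOverarc H b x ↔ IsOverarc H b v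

theorem isOverarcClass_setOf_isSmallestOverarc (a : Arc) :
    IsOverarcClass H {v : ℤ | Isolated H v ∧ IsSmallestOverarc H a v} := by
  rintro v ⟨-, hav, hvmin⟩ x
  constructor
  · rintro ⟨hiso, hax, hxmin⟩
    refine ⟨hiso, fun b => ⟨fun hbx => ?_, fun hbv => ?_⟩⟩
    · have := hxmin b hbx; exact ⟨hbx.1, by linarith [hav.2.1], by linarith [hav.2.2]⟩
    · have := hvmin b hbv; exact ⟨hbv.1, by linarith [hax.2.1], by linarith [hax.2.2]⟩
  · rintro ⟨hiso, hiff⟩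
    exact ⟨hiso, (hiff a).mpr hav, fun b hbx => hvmin b ((hiff b).mp hbx)⟩

theorem isOverarcClass_noOverarcIsolated : IsOverarcClass H (NoOverarcIsolated H) := by
  rintro v ⟨-, hvno⟩ x
  constructor
  · rintro ⟨hiso, hxno⟩
    exact ⟨hiso, fun b => iff_of_false (hxno b) (hvno b)⟩
  · rintro ⟨hiso, hiff⟩
    exact ⟨hiso, fun b hbx => hvno b ((hiff b).mp hbx)⟩

namespace IsOverarcClass

variable {S : Set ℤ}

theorem isolated (hS : IsOverarcClass H S) {v : ℤ} (hv : v ∈ S) : Isolated H v :=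
  ((hS v hv v).mp hv).1

theorem isOverarc_iff (hS : IsOverarcClass H S) {v x : ℤ} (hv : v ∈ S) (hx : x ∈ S) (b : Arc) :
    IsOverarc H b x ↔ IsOverarc H b v :=
  ((hS v hv x).mp hx).2 b

theorem inter_Ioo_eq_uncovered (hS : IsOverarcClass H S) (hAdm : ∀ h ∈ H, Adm w h) {v v' : ℤ}
    (hv : v ∈ S) (hv' : v' ∈ S) : S ∩ Ioo v v' = uncovered H v v' := by
  have hin : ∀ b ∈ H, (v < b.1 ∧ b.1 < v') ∨ (v < b.2 ∧ b.2 < v') → v < b.2 ∧ b.1 < v' := by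
    intro b hb hend
    have hiff := hS.isOverarc_iff hv hv' b
    have := hS.isolated hv b hb
    have := hS.isolated hv' b hb
    have := (hAdm b hb).1
    simp only [IsOverarc, hb, true_and] at hiff
    omega
  ext x
  constructor
  · rintro ⟨hxS, hvx, hxv'⟩
    refine ⟨hvx, hxv', fun b hb hvb hbv' hcov => ?_⟩
    have := hS.isolated hxS b hb
    have := (hS.isOverarc_iff hv hxS b).mp ⟨hb, by omega, by omega⟩
    exact absurd this.2.1 (by omega)
  · intro hx
    refine ⟨(hS v hv x).mpr ⟨isolated_of_mem_uncovered hAdm hin hx, fun b => ?_⟩, hx.1, hx.2.1⟩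
    constructor
    · intro hbx
      have := le_of_isOverarc_of_mem_uncovered hin hx hbx
      have := hS.isolated hv b hbx.1
      have := hx.1; have := hx.2.1
      exact ⟨hbx.1, by omega, by omega⟩
    · rintro ⟨hb, hbv, hvb⟩
      have := hS.isolated hv' b hb
      have := hin b hb
      have := hx.1; have := hx.2.1
      exact ⟨hb, by omega, by omega⟩

theorem dvd_sub_ncard_inter_Ioo (hS : IsOverarcClass H S) (hAdm : ∀ h ∈ H, Adm w h)
    (hnc : IsNoncrossing H) {v v' : ℤ} (hv : v ∈ S) (hv' : v' ∈ S) (hlt : v < v') :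
    (1 - w) ∣ v' - v - 1 - (S ∩ Ioo v v').ncard := by
  rw [hS.inter_Ioo_eq_uncovered hAdm hv hv']
  exact dvd_sub_ncard_uncovered hAdm hnc hlt

theorem le_ncard_of_adm (hS : IsOverarcClass H S) (hAdm : ∀ h ∈ H, Adm w h)
    (hnc : IsNoncrossing H) (hfin : S.Finite) {v v' : ℤ} (hv : v ∈ S) (hv' : v' ∈ S)
    (hadm : Adm w (v', v)) : 1 - w ≤ S.ncard := by
  obtain ⟨hlt, -, hdvd⟩ := hadm
  set N := (S ∩ Ioo v v').ncard
  have hN : (1 - w) ∣ (N : ℤ) + 2 := by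
    have := dvd_sub hdvd (hS.dvd_sub_ncard_inter_Ioo hAdm hnc hv hv' hlt)
    rwa [show v' - v + 1 - (v' - v - 1 - (N : ℤ)) = N + 2 by ring] at this
  have hsub : insert v (insert v' (S ∩ Ioo v v')) ⊆ S :=
    insert_subset hv (insert_subset hv' inter_subset_left)
  have hfin' : (S ∩ Ioo v v').Finite := hfin.subset inter_subset_left
  have hcard : (insert v (insert v' (S ∩ Ioo v v'))).ncard = N + 2 := by
    rw [ncard_insert_of_notMem (by simp [hlt.ne]) (hfin'.insert v'),
      ncard_insert_of_notMem (by simp) hfin']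
  have := ncard_le_ncard hsub hfin
  have := Int.le_of_dvd (by positivity) hN
  omega

theorem finite_and_ncard_le_iff (hS : IsOverarcClass H S) (hw : w ≤ -1)
    (hAdm : ∀ h ∈ H, Adm w h) (hnc : IsNoncrossing H) :
    (S.Finite ∧ (S.ncard : ℤ) ≤ -w) ↔ ∀ v ∈ S, ∀ v' ∈ S, ¬ Adm w (v', v) := by
  constructor
  · rintro ⟨hfin, hcard⟩ v hv v' hv' hadm
    have := hS.le_ncard_of_adm hAdm hnc hfin hv hv' hadm
    omega
  intro hnot
  by_contra hbig
  obtain ⟨F, hFS, hF, hFcard⟩ : ∃ F ⊆ S, F.Finite ∧ F.ncard = (1 - w).toNat := by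
    by_cases hfin : S.Finite
    · obtain ⟨F, hFS, hFcard⟩ := exists_subset_card_eq (s := S) (n := (1 - w).toNat)
        (by have := not_and.mp hbig hfin; omega)
      exact ⟨F, hFS, hfin.subset hFS, hFcard⟩
    · exact Infinite.exists_subset_ncard_eq hfin _
  obtain ⟨v, hv, v', hv', hlt, hN⟩ :=
    exists_ncard_inter_Ioo_eq_of_subset hFS hF (n := (-w - 1).toNat) (by omega)
  have hdvd := hS.dvd_sub_ncard_inter_Ioo hAdm hnc hv hv' hlt
  have hle : ((S ∩ Ioo v v').ncard : ℤ) ≤ (Ioo v v').ncard :=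
    Nat.cast_le.mpr (ncard_le_ncard inter_subset_right (finite_Ioo v v'))
  rw [Int.ncard_Ioo hlt] at hle
  rw [hN, Int.toNat_of_nonneg (by omega)] at hdvd hle
  refine hnot v hv v' hv' ⟨hlt, by simp only; omega, ?_⟩
  have := dvd_add hdvd (dvd_refl (1 - w))
  rwa [show v' - v - 1 - (-w - 1) + (1 - w) = v' - v + 1 by ring] at this

theorem not_adm_of_maximal (hS : IsOverarcClass H S)
    (hmax : ∀ z : Arc, Adm w z → z ∉ H → ∃ x ∈ H, Cross x z ∨ ShareVertex x z) {v v' : ℤ}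
    (hv : v ∈ S) (hv' : v' ∈ S) : ¬ Adm w (v', v) := by
  intro hadm
  obtain ⟨x, hx, hcs⟩ := hmax _ hadm fun hmem => (hS.isolated hv _ hmem).2 rfl
  have hiff := hS.isOverarc_iff hv hv' x
  have := hS.isolated hv x hx
  have := hS.isolated hv' x hx
  simp only [IsOverarc, hx, true_and] at hiff
  unfold Cross ShareVertex at hcs
  omega

theorem mem_of_compatible (hS : IsOverarcClass H S) {z : Arc} (hz : z.2 ∈ S) (hz₁ : z.2 < z.1)
    (hcomp : ∀ x ∈ H, ¬ Cross x z ∧ ¬ ShareVertex x z) : z.1 ∈ S := by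
  refine (hS z.2 hz z.1).mpr ⟨fun b hb => ?_, fun b => ?_⟩
  · have := (hcomp b hb).2
    unfold ShareVertex at this
    omega
  · constructor <;> rintro ⟨hb, h₁, h₂⟩ <;>
    · have := hcomp b hb
      unfold Cross ShareVertex at this
      exact ⟨hb, by omega, by omega⟩

end IsOverarcClass

theorem ncard_setOf_isSmallestOverarc_eq (hw : w ≤ -1) (hAdm : ∀ h ∈ H, Adm w h)
    (hnc : IsNoncrossing H) {a : Arc} (ha : a ∈ H)
    (hle : ({v : ℤ | Isolated H v ∧ IsSmallestOverarc H a v}.ncard : ℤ) ≤ -w) :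
    ({v : ℤ | Isolated H v ∧ IsSmallestOverarc H a v}.ncard : ℤ) = -w - 1 := by
  set N : ℤ := ↑({v : ℤ | Isolated H v ∧ IsSmallestOverarc H a v}.ncard)
  have hd := dvd_sub_ncard_uncovered hAdm hnc (hAdm a ha).1
  rw [← setOf_isSmallestOverarc_eq_uncovered hAdm hnc ha] at hd
  have hN : (1 - w) ∣ N + 2 := by
    have := dvd_sub (hAdm a ha).2.2 hd
    rwa [show a.1 - a.2 + 1 - (a.1 - a.2 - 1 - N) = N + 2 by ring] at this
  have hge := Int.le_of_dvd (by positivity) hN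
  have := Int.eq_zero_of_dvd_of_nonneg_of_lt (by omega) (by omega) (dvd_sub hN (dvd_refl (1 - w)))
  omega

theorem isMaximalNoncrossing_iff (hw : w ≤ -1) (hAdm : ∀ h ∈ H, Adm w h) :
    IsMaximalNoncrossing w H ↔
      IsNoncrossing H ∧
      (∀ a ∈ H, {v : ℤ | Isolated H v ∧ IsSmallestOverarc H a v}.Finite ∧
        ({v : ℤ | Isolated H v ∧ IsSmallestOverarc H a v}.ncard : ℤ) = -w - 1) ∧
      ((NoOverarcIsolated H).Finite ∧ ((NoOverarcIsolated H).ncard : ℤ) ≤ -w) := by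
  constructor
  · rintro ⟨hnc, hmax⟩
    have hsmall : ∀ S, IsOverarcClass H S → S.Finite ∧ (S.ncard : ℤ) ≤ -w := fun S hS =>
      (hS.finite_and_ncard_le_iff hw hAdm hnc).mpr fun _ hv _ hv' =>
        hS.not_adm_of_maximal hmax hv hv'
    refine ⟨hnc, fun a ha => ?_, hsmall _ isOverarcClass_noOverarcIsolated⟩
    obtain ⟨hfin, hle⟩ := hsmall _ (isOverarcClass_setOf_isSmallestOverarc a)
    exact ⟨hfin, ncard_setOf_isSmallestOverarc_eq hw hAdm hnc ha hle⟩
  rintro ⟨hnc, hclass, hnone⟩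
  refine ⟨hnc, fun z hz hzH => ?_⟩
  by_contra! hcomp
  have hiso : Isolated H z.2 := fun b hb => by
    have := (hcomp b hb).2
    unfold ShareVertex at this
    omega
  have hlarge : ∀ S, IsOverarcClass H S → z.2 ∈ S → ¬ (S.Finite ∧ (S.ncard : ℤ) ≤ -w) :=
    fun S hS hzS hsmall => (hS.finite_and_ncard_le_iff hw hAdm hnc).mp hsmall z.2 hzS z.1
      (hS.mem_of_compatible hzS hz.1 hcomp) hz
  by_cases hover : ∃ b, IsOverarc H b z.2
  · obtain ⟨a, ha⟩ := exists_isSmallestOverarc hnc hover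
    obtain ⟨hfin, hcard⟩ := hclass a ha.1.1
    exact hlarge _ (isOverarcClass_setOf_isSmallestOverarc a) ⟨hiso, ha⟩ ⟨hfin, by omega⟩
  · push Not at hover
    exact hlarge _ isOverarcClass_noOverarcIsolated ⟨hiso, hover⟩ hnone

end

/-- Theorem 3.4: a set `H` of `d`-admissible arcs is a `|w|`-Hom-configuration iff
(1) no two arcs of `H` cross and no two arcs of `H` share a vertex;
(2) for each `a ∈ H` there are precisely `|w| - 1` isolated vertices whose smallest
overarc is `a`; and (3) there are at most `|w|` isolated vertices with no overarc. -/
theorem stmt5 (w : ℤ) (hw : w ≤ -1) (H : Set Arc) (hAdm : ∀ h ∈ H, Adm w h) :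
    IsHomConfig w H ↔
      ((∀ a ∈ H, ∀ b ∈ H, a ≠ b → ¬ Cross a b ∧ ¬ ShareVertex a b) ∧
       (∀ a ∈ H, {v : ℤ | Isolated H v ∧ IsSmallestOverarc H a v}.Finite ∧
          ({v : ℤ | Isolated H v ∧ IsSmallestOverarc H a v}.ncard : ℤ) = -w - 1) ∧
       ((NoOverarcIsolated H).Finite ∧ ((NoOverarcIsolated H).ncard : ℤ) ≤ -w)) :=
  (isHomConfig_iff_isMaximalNoncrossing hw hAdm).trans (isMaximalNoncrossing_iff hw hAdm)

end SphericalArcs
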